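/- arXiv:2401.08452 — 2 statements merged into one kernel-verified Lean document; each statement's English description precedes it below -/
import Mathlib

section
/- Let |Ψ⟩ = (|01⟩ + |10⟩)/√2 in ℂ² ⊗ ℂ², with measurement settings A_0 = B_0 = σ_z, A_1 = cos(2α) σ_z − sin(2α) σ_x with α = −5π/6, and B_1 = cos(2β) σ_z − sin(2β) σ_x with β = π/6. Then the CHSH winning probability w = (1/4) Σ_{x,y∈{0,1}} Σ_{a,b∈{0,1}: x·y ⊕ a ⊕ b = 1} P(a,b|x,y) equals 13/16 = 0.8125. -/
/-!
Writing `Π_a^O = (1 + s_a O)/2` with `s_a = ±1`, each correlation is `1/4` of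
`⟨1⟩ + s_a ⟨A ⊗ 1⟩ + s_b ⟨1 ⊗ B⟩ + s_a s_b ⟨A ⊗ B⟩`. Summing over the two winning outcome
pairs of each input pair cancels the marginals, so
`w = ⟨1⟩/2 - (E₀₀ + E₀₁ + E₁₀ - E₁₁)/8` with `E_xy = ⟨A_x ⊗ B_y⟩`. For `|Ψ⁺⟩` and
observables in the x–z plane, `⟨obs s ⊗ obs t⟩ = -cos (2s + 2t)`, so the four correlators
are `-1, -1/2, -1/2, 1/2` and `w = 1/2 + 5/16`.
-/

open Matrix Kronecker

noncomputable section

/-- Pauli Z matrix. -/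
def σz : Matrix (Fin 2) (Fin 2) ℂ := !![1, 0; 0, -1]

/-- Pauli X matrix. -/
def σx : Matrix (Fin 2) (Fin 2) ℂ := !![0, 1; 1, 0]

/-- Outcome projector `Π_a^O = (I ± O)/2` of a binary observable `O`. -/
def projQ (a : Fin 2) (O : Matrix (Fin 2) (Fin 2) ℂ) : Matrix (Fin 2) (Fin 2) ℂ :=
  if a = 0 then (2⁻¹ : ℂ) • (1 + O) else (2⁻¹ : ℂ) • (1 - O)

/-- Expectation value `⟨ψ| M |ψ⟩` on the two-qubit space `ℂ² ⊗ ℂ²`,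
with vectors indexed by `Fin 2 × Fin 2` (so `|ab⟩` is the basis vector at `(a,b)`). -/
def expval (M : Matrix (Fin 2 × Fin 2) (Fin 2 × Fin 2) ℂ) (ψ : Fin 2 × Fin 2 → ℂ) : ℂ :=
  ∑ p, star (ψ p) * M.mulVec ψ p

/-- Born-rule correlation `P(a,b|x,y) = ⟨ψ| Π_a^{A} ⊗ Π_b^{B} |ψ⟩`
for measurement settings `A` (Alice) and `B` (Bob). -/
def corr (A B : Matrix (Fin 2) (Fin 2) ℂ) (a b : Fin 2) (ψ : Fin 2 × Fin 2 → ℂ) : ℂ :=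
  expval (projQ a A ⊗ₖ projQ b B) ψ

/-- Measurement observable `cos(2t) σ_z - sin(2t) σ_x`. -/
def obs (t : ℝ) : Matrix (Fin 2) (Fin 2) ℂ :=
  (Real.cos (2 * t) : ℂ) • σz - (Real.sin (2 * t) : ℂ) • σx

/-- CHSH winning probability with uniform inputs:
`w = (1/4) ∑_{x,y} ∑_{a,b : x·y ⊕ a ⊕ b = 1} P(a,b|x,y)` (arithmetic in `Fin 2`). -/
def chshWin (A B : Fin 2 → Matrix (Fin 2) (Fin 2) ℂ) (ψ : Fin 2 × Fin 2 → ℂ) : ℂ :=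
  (4⁻¹ : ℂ) * ∑ x : Fin 2, ∑ y : Fin 2, ∑ a : Fin 2, ∑ b : Fin 2,
    if x * y + a + b = 1 then corr (A x) (B y) a b ψ else 0

def outcomeSign (a : Fin 2) : ℂ := if a = 0 then 1 else -1

lemma projQ_eq_smul (a : Fin 2) (O : Matrix (Fin 2) (Fin 2) ℂ) :
    projQ a O = (2⁻¹ : ℂ) • (1 + outcomeSign a • O) := by
  fin_cases a <;> simp [projQ, outcomeSign, sub_eq_add_neg]

lemma expval_eq_dotProduct (M : Matrix (Fin 2 × Fin 2) (Fin 2 × Fin 2) ℂ)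
    (ψ : Fin 2 × Fin 2 → ℂ) :
    expval M ψ = star ψ ⬝ᵥ M *ᵥ ψ := rfl

lemma expval_add (M N : Matrix (Fin 2 × Fin 2) (Fin 2 × Fin 2) ℂ)
    (ψ : Fin 2 × Fin 2 → ℂ) :
    expval (M + N) ψ = expval M ψ + expval N ψ := by
  simp only [expval_eq_dotProduct, add_mulVec, dotProduct_add]

lemma expval_smul (c : ℂ) (M : Matrix (Fin 2 × Fin 2) (Fin 2 × Fin 2) ℂ)
    (ψ : Fin 2 × Fin 2 → ℂ) :
    expval (c • M) ψ = c * expval M ψ := by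
  simp only [expval_eq_dotProduct, smul_mulVec, dotProduct_smul, smul_eq_mul]

lemma corr_eq (A B : Matrix (Fin 2) (Fin 2) ℂ) (a b : Fin 2) (ψ : Fin 2 × Fin 2 → ℂ) :
    corr A B a b ψ = 4⁻¹ * (expval 1 ψ + outcomeSign a * expval (A ⊗ₖ 1) ψ
      + outcomeSign b * expval (1 ⊗ₖ B) ψ
      + outcomeSign a * outcomeSign b * expval (A ⊗ₖ B) ψ) := by
  simp only [corr, projQ_eq_smul, smul_kronecker, kronecker_smul, add_kronecker, kronecker_add,
    one_kronecker_one, expval_add, expval_smul]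
  ring

lemma chshWin_eq (A B : Fin 2 → Matrix (Fin 2) (Fin 2) ℂ) (ψ : Fin 2 × Fin 2 → ℂ) :
    chshWin A B ψ = 2⁻¹ * expval 1 ψ
      - 8⁻¹ * (expval (A 0 ⊗ₖ B 0) ψ + expval (A 0 ⊗ₖ B 1) ψ
        + expval (A 1 ⊗ₖ B 0) ψ - expval (A 1 ⊗ₖ B 1) ψ) := by
  simp only [chshWin, Fin.sum_univ_two, corr_eq, outcomeSign, Fin.isValue, Fin.reduceAdd,
    Fin.reduceMul, zero_ne_one, one_ne_zero, ↓reduceIte]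
  ring

def psiPlus : Fin 2 × Fin 2 → ℂ := fun p =>
  if p = (0, 1) then ((Real.sqrt 2)⁻¹ : ℂ)
  else if p = (1, 0) then ((Real.sqrt 2)⁻¹ : ℂ) else 0

lemma expval_psiPlus (M : Matrix (Fin 2 × Fin 2) (Fin 2 × Fin 2) ℂ) :
    expval M psiPlus =
      2⁻¹ * (M (0, 1) (0, 1) + M (0, 1) (1, 0) + M (1, 0) (0, 1) + M (1, 0) (1, 0)) := by
  have h_inv_sq : ((Real.sqrt 2 : ℂ))⁻¹ * ((Real.sqrt 2 : ℂ))⁻¹ = 2⁻¹ := by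
    rw [← mul_inv, ← Complex.ofReal_mul, Real.mul_self_sqrt zero_le_two, Complex.ofReal_ofNat]
  simp only [expval, psiPlus, Prod.ext_iff, RCLike.star_def, mulVec, dotProduct, mul_ite, mul_zero,
    Fintype.sum_prod_type, Fin.sum_univ_two, zero_ne_one, one_ne_zero, and_false, and_true,
    ↓reduceIte, zero_add, add_zero, map_zero, zero_mul, map_inv₀, Complex.conj_ofReal]
  linear_combination
    (M (0, 1) (0, 1) + M (0, 1) (1, 0) + M (1, 0) (0, 1) + M (1, 0) (1, 0)) * h_inv_sq

lemma expval_one_psiPlus : expval 1 psiPlus = 1 := by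
  rw [expval_psiPlus]
  simp only [one_apply_eq, ne_eq, Prod.mk.injEq, zero_ne_one, one_ne_zero, and_self,
    not_false_eq_true, one_apply_ne]
  norm_num

lemma obs_zero : obs 0 = σz := by simp [obs]

lemma expval_obs_kronecker_obs_psiPlus (s t : ℝ) :
    expval (obs s ⊗ₖ obs t) psiPlus = -Real.cos (2 * s + 2 * t) := by
  rw [expval_psiPlus]
  simp only [obs, Complex.ofReal_cos, Complex.ofReal_mul, Complex.ofReal_ofNat, σz, smul_of,
    smul_cons, smul_eq_mul, mul_one, mul_zero, smul_empty, mul_neg, Complex.ofReal_sin, σx,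
    of_sub_of, sub_cons, head_cons, sub_zero, tail_cons, zero_sub, sub_self, zero_empty,
    kroneckerMap_apply, of_apply, cons_val', cons_val_zero, cons_val_fin_one, cons_val_one, neg_mul,
    neg_neg, Real.cos_add, Complex.ofReal_sub, neg_sub]
  ring

/-- For the Bell state `|Ψ⟩ = (|01⟩ + |10⟩)/√2` with settings
`A_0 = B_0 = σ_z`, `A_1 = cos 2α σ_z - sin 2α σ_x` with `α = -5π/6`, and
`B_1 = cos 2β σ_z - sin 2β σ_x` with `β = π/6`, the CHSH winning probability
equals `13/16 = 0.8125` (the maximal CHSH value in class `Q_{2a}`). -/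
theorem class2a_chsh_winning_probability :
    let ψ : Fin 2 × Fin 2 → ℂ := fun p =>
      if p = (0, 1) then ((Real.sqrt 2)⁻¹ : ℂ)
      else if p = (1, 0) then ((Real.sqrt 2)⁻¹ : ℂ) else 0
    let A : Fin 2 → Matrix (Fin 2) (Fin 2) ℂ := fun x =>
      if x = 0 then σz else obs (-5 * Real.pi / 6)
    let B : Fin 2 → Matrix (Fin 2) (Fin 2) ℂ := fun y =>
      if y = 0 then σz else obs (Real.pi / 6)
    chshWin A B ψ = (13 / 16 : ℂ) := by
  intro ψ A B
  change chshWin A B psiPlus = 13 / 16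
  rw [chshWin_eq]
  simp only [A, B, ite_true, ← obs_zero, one_ne_zero, ite_false, expval_one_psiPlus,
    expval_obs_kronecker_obs_psiPlus]
  have h01 : Real.cos (2 * 0 + 2 * (Real.pi / 6)) = 1 / 2 := by
    rw [show 2 * 0 + 2 * (Real.pi / 6) = Real.pi / 3 by ring, Real.cos_pi_div_three]
  have h10 : Real.cos (2 * (-5 * Real.pi / 6) + 2 * 0) = 1 / 2 := by
    rw [show 2 * (-5 * Real.pi / 6) + 2 * 0 = Real.pi / 3 - 2 * Real.pi by ring,
      Real.cos_sub_two_pi, Real.cos_pi_div_three]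
  have h11 : Real.cos (2 * (-5 * Real.pi / 6) + 2 * (Real.pi / 6)) = -(1 / 2) := by
    rw [show 2 * (-5 * Real.pi / 6) + 2 * (Real.pi / 6) = -(Real.pi / 3) - Real.pi by ring,
      Real.cos_sub_pi, Real.cos_neg, Real.cos_pi_div_three]
  rw [h01, h10, h11]
  norm_num
end
end

section
/- Let α, β ∈ (−π/2, π/2) and set θ = arctan(tan α · tan β). Let |Ψ⟩ = cos θ |01⟩ + sin θ |10⟩ in ℂ² ⊗ ℂ², with measurement settings A_1 = cos(2α) σ_z − sin(2α) σ_x and B_1 = cos(2β) σ_z − sin(2β) σ_x. Then P(1,0|1,1) = 0, i.e., ⟨Ψ| (Π_1^{A_1} ⊗ Π_0^{B_1}) |Ψ⟩ = 0. -/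
open Matrix Kronecker

noncomputable section

/-- For `α, β ∈ (-π/2, π/2)`, `θ = arctan(tan α tan β)`, the
state `|Ψ⟩ = cos θ |01⟩ + sin θ |10⟩` with settings
`A_1 = cos 2α σ_z - sin 2α σ_x` and `B_1 = cos 2β σ_z - sin 2β σ_x`
satisfies `P(1,0|1,1) = 0` (the extra defining constraint of class `Q_{3b}`). -/
theorem class3b_zero_probability (α β : ℝ)
    (hα : α ∈ Set.Ioo (-(Real.pi / 2)) (Real.pi / 2))
    (hβ : β ∈ Set.Ioo (-(Real.pi / 2)) (Real.pi / 2)) :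
    let θ : ℝ := Real.arctan (Real.tan α * Real.tan β)
    let ψ : Fin 2 × Fin 2 → ℂ := fun p =>
      if p = (0, 1) then (Real.cos θ : ℂ)
      else if p = (1, 0) then (Real.sin θ : ℂ) else 0
    corr (obs α) (obs β) 1 0 ψ = 0 := by
  intro θ ψ
  have hca : Real.cos α ≠ 0 := (Real.cos_pos_of_mem_Ioo hα).ne'
  have hcb : Real.cos β ≠ 0 := (Real.cos_pos_of_mem_Ioo hβ).ne'
  have hkey : Real.cos θ * (Real.sin α * Real.sin β)
      = Real.sin θ * (Real.cos α * Real.cos β) := by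
    have h1 : Real.tan θ = Real.tan α * Real.tan β := Real.tan_arctan _
    have h2 : Real.cos θ ≠ 0 := (Real.cos_arctan_pos _).ne'
    rw [Real.tan_eq_sin_div_cos, Real.tan_eq_sin_div_cos, Real.tan_eq_sin_div_cos] at h1
    field_simp at h1
    linarith [h1]
  have hC : (Real.cos θ : ℂ) * (Real.sin α * Real.sin β)
      = (Real.sin θ : ℂ) * (Real.cos α * Real.cos β) := by exact_mod_cast hkey
  have h2a : ((Real.cos (2*α)) : ℂ) = (Real.cos α)^2 - (Real.sin α)^2 := by
    push_cast [Real.cos_two_mul']; ring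
  have h2b : ((Real.cos (2*β)) : ℂ) = (Real.cos β)^2 - (Real.sin β)^2 := by
    push_cast [Real.cos_two_mul']; ring
  have hs2a : ((Real.sin (2*α)) : ℂ) = 2 * Real.sin α * Real.cos α := by
    push_cast [Real.sin_two_mul]; ring
  have hs2b : ((Real.sin (2*β)) : ℂ) = 2 * Real.sin β * Real.cos β := by
    push_cast [Real.sin_two_mul]; ring
  simp only [corr, expval, obs, projQ, σz, σx, Fintype.sum_prod_type, Fin.sum_univ_two,
    mulVec, dotProduct, kroneckerMap_apply, Matrix.sub_apply, Matrix.add_apply,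
    Matrix.smul_apply, Matrix.one_apply, Matrix.cons_val', Matrix.cons_val_zero,
    Matrix.cons_val_one, Matrix.head_cons, Matrix.head_fin_const, Matrix.of_apply,
    Matrix.empty_val', Matrix.cons_val_fin_one, smul_eq_mul, ψ]
  norm_num [Prod.ext_iff, Complex.conj_ofReal, -Complex.ofReal_cos, -Complex.ofReal_sin]
  rw [h2a, h2b, hs2a, hs2b]
  have ha : ((Real.sin α : ℂ))^2 + ((Real.cos α : ℂ))^2 = 1 := by
    exact_mod_cast congrArg (Complex.ofReal ·) (Real.sin_sq_add_cos_sq α)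
  have hb : ((Real.sin β : ℂ))^2 + ((Real.cos β : ℂ))^2 = 1 := by
    exact_mod_cast congrArg (Complex.ofReal ·) (Real.sin_sq_add_cos_sq β)
  linear_combination (((Real.cos θ):ℂ) * (Real.sin α * Real.sin β)
      - (Real.sin θ : ℂ) * (Real.cos α * Real.cos β)) * hC
    + ((-1/4 : ℂ) * (Real.cos θ:ℂ)^2 + (1/4) * (Real.cos β:ℂ)^2 * (Real.cos θ:ℂ)^2
      + (-1/4) * (Real.sin β:ℂ)^2 * (Real.cos θ:ℂ)^2
      + (-3/4) * (Real.cos β:ℂ)^2 * (Real.sin θ:ℂ)^2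
      + (-1/4) * (Real.sin β:ℂ)^2 * (Real.sin θ:ℂ)^2 + (1/4) * (Real.sin θ:ℂ)^2) * ha
    + ((-1/2 : ℂ) * (Real.sin α:ℂ)^2 * (Real.cos θ:ℂ)^2
      + (1/2) * (Real.sin α:ℂ)^2 * (Real.sin θ:ℂ)^2 + (-1/2) * (Real.sin θ:ℂ)^2) * hb
end
end
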